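/- arXiv:2309.02867 — 5 statements merged into one kernel-verified Lean document; each statement's English description precedes it below -/
import Mathlib

section
/- The series ∑_{k≥0} (-1)^k a^{2k} Γ((n+2k)/β) / (Γ(k+1) Γ(k+n/2)) converges absolutely for every real a, every positive integer n, and every real β > 1. -/
/-!
Ratio test. With `y = (n + 2k)/β`, consecutive terms have ratio
`a² Γ(y + 2/β) / (Γ(y) (k + 1)(k + n/2))`. Log-convexity of `Γ` interpolates between
`Γ(y)` and `Γ(y + 2) = y(y + 1) Γ(y)`, giving `Γ(y + 2/β) ≤ Γ(y) (y(y + 1))^(1/β) = O(k^(2/β))`;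
since `2/β < 2` the ratio is eventually at most `1/2`.
-/

open Real Filter

namespace Real

lemma Gamma_add_two_mul_le_mul_rpow {y θ : ℝ} (hy : 0 < y) (hθ₀ : 0 < θ) (hθ₁ : θ < 1) :
    Gamma (y + 2 * θ) ≤ Gamma y * (y * (y + 1)) ^ θ := by
  have hΓy : 0 < Gamma y := Gamma_pos_of_pos hy
  have hshift : Gamma (y + 2) = y * (y + 1) * Gamma y := by
    rw [show y + 2 = y + 1 + 1 by ring, Gamma_add_one (by positivity), Gamma_add_one hy.ne']
    ring
  calc Gamma (y + 2 * θ) = Gamma ((1 - θ) * y + θ * (y + 2)) := by ring_nf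
    _ ≤ Gamma y ^ (1 - θ) * Gamma (y + 2) ^ θ :=
      Gamma_mul_add_mul_le_rpow_Gamma_mul_rpow_Gamma hy (by linarith) (by linarith) hθ₀ (by ring)
    _ = Gamma y * (y * (y + 1)) ^ θ := by
      rw [hshift, mul_rpow (by positivity) hΓy.le, mul_left_comm, ← rpow_add hΓy,
        sub_add_cancel, rpow_one, mul_comm]

end Real

lemma eventually_const_mul_rpow_le_sq (C : ℝ) {p : ℝ} (hp : p < 2) :
    ∀ᶠ x : ℝ in atTop, C * x ^ p ≤ x ^ 2 := by
  filter_upwards [(tendsto_rpow_atTop (sub_pos.2 hp)).eventually_ge_atTop C,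
    eventually_gt_atTop 0] with x hC hx
  calc C * x ^ p ≤ x ^ (2 - p) * x ^ p := by gcongr
    _ = x ^ 2 := by rw [← rpow_add hx, sub_add_cancel, rpow_two]

noncomputable def gammaSeriesTerm (a ν β : ℝ) (k : ℕ) : ℝ :=
  a ^ (2 * k) * Gamma ((ν + 2 * k) / β) / (Gamma (k + 1) * Gamma (k + ν / 2))

section gammaSeriesTerm

variable {a ν β : ℝ}

lemma gammaSeriesTerm_nonneg (hν : 0 < ν) (hβ : 0 < β) (k : ℕ) :
    0 ≤ gammaSeriesTerm a ν β k := by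
  unfold gammaSeriesTerm
  rw [pow_mul]
  positivity

lemma gammaSeriesTerm_succ (hν : 0 < ν) (hβ : 0 < β) (k : ℕ) :
    gammaSeriesTerm a ν β (k + 1) =
      a ^ 2 * (Gamma ((ν + 2 * k) / β + 2 / β) / Gamma ((ν + 2 * k) / β)) /
        ((k + 1) * (k + ν / 2)) * gammaSeriesTerm a ν β k := by
  unfold gammaSeriesTerm
  have : Gamma ((ν + 2 * k) / β) * Gamma (k + 1) * Gamma (k + ν / 2) ≠ 0 := by positivity
  have hk : ((k : ℝ) + 1) ≠ 0 := by positivity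
  have hkν : ((k : ℝ) + ν / 2) ≠ 0 := by positivity
  rw [Nat.cast_succ, Gamma_add_one hk, show (k : ℝ) + 1 + ν / 2 = k + ν / 2 + 1 by ring,
    Gamma_add_one hkν, show (ν + 2 * (k + 1)) / β = (ν + 2 * k) / β + 2 / β by ring,
    show 2 * (k + 1) = 2 * k + 2 by ring, pow_add]
  field_simp

lemma gammaSeriesTerm_succ_le (hν : 0 < ν) (hβ : 1 < β) {k : ℕ} (hk : 1 ≤ k) :
    gammaSeriesTerm a ν β (k + 1) ≤
      a ^ 2 * ((ν + 3) * k) ^ (2 / β) / ((k + 1) * (k + ν / 2)) * gammaSeriesTerm a ν β k := by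
  have hβ₀ : 0 < β := one_pos.trans hβ
  have hk₁ : (1 : ℝ) ≤ k := by exact_mod_cast hk
  set y := (ν + 2 * k) / β
  have hy : 0 < y := by positivity
  have hyk : y ≤ ν + 2 * k := div_le_self (by positivity) hβ.le
  have hyy : y * (y + 1) ≤ ((ν + 3) * k) ^ 2 := by
    have : y + 1 ≤ (ν + 3) * k := by nlinarith
    nlinarith
  have hratio : Gamma (y + 2 / β) / Gamma y ≤ ((ν + 3) * k) ^ (2 / β) := by
    rw [div_le_iff₀' (by positivity)]
    calc Gamma (y + 2 / β) = Gamma (y + 2 * β⁻¹) := by ring_nf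
      _ ≤ Gamma y * (y * (y + 1)) ^ β⁻¹ :=
        Gamma_add_two_mul_le_mul_rpow hy (by positivity) (inv_lt_one_of_one_lt₀ hβ)
      _ ≤ Gamma y * (((ν + 3) * k) ^ 2) ^ β⁻¹ := by gcongr
      _ = Gamma y * ((ν + 3) * k) ^ (2 / β) := by
        rw [← rpow_natCast, ← rpow_mul (by positivity), Nat.cast_ofNat, div_eq_mul_inv]
  rw [gammaSeriesTerm_succ hν hβ₀]
  have := gammaSeriesTerm_nonneg (a := a) hν hβ₀ k
  gcongr

lemma eventually_gammaSeriesTerm_ratio_le_half (a : ℝ) (hν : 0 < ν) (hβ : 1 < β) :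
    ∀ᶠ k : ℕ in atTop, a ^ 2 * ((ν + 3) * k) ^ (2 / β) / ((k + 1) * (k + ν / 2)) ≤ 1 / 2 := by
  have hp : 2 / β < 2 := by
    rw [div_lt_iff₀ (one_pos.trans hβ)]
    linarith
  filter_upwards [tendsto_natCast_atTop_atTop.eventually
    (eventually_const_mul_rpow_le_sq (2 * a ^ 2 * (ν + 3) ^ (2 / β)) hp)] with k hk
  rw [div_le_iff₀ (by positivity), mul_rpow (by positivity) k.cast_nonneg]
  nlinarith

lemma summable_gammaSeriesTerm (a : ℝ) (hν : 0 < ν) (hβ : 1 < β) :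
    Summable (gammaSeriesTerm a ν β) := by
  have hβ₀ : 0 < β := one_pos.trans hβ
  refine summable_of_ratio_norm_eventually_le (r := 1 / 2) (by norm_num) ?_
  filter_upwards [eventually_gammaSeriesTerm_ratio_le_half a hν hβ, eventually_ge_atTop 1]
    with k hratio hk
  rw [norm_of_nonneg (gammaSeriesTerm_nonneg hν hβ₀ _),
    norm_of_nonneg (gammaSeriesTerm_nonneg hν hβ₀ _)]
  exact (gammaSeriesTerm_succ_le hν hβ hk).trans
    (mul_le_mul_of_nonneg_right hratio (gammaSeriesTerm_nonneg hν hβ₀ _))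

lemma abs_neg_one_pow_mul_eq_gammaSeriesTerm (hν : 0 < ν) (hβ : 0 < β) (k : ℕ) :
    |(-1 : ℝ) ^ k * a ^ (2 * k) * Gamma ((ν + 2 * k) / β) / (Gamma (k + 1) * Gamma (k + ν / 2))|
      = gammaSeriesTerm a ν β k := by
  rw [mul_assoc, mul_div_assoc, abs_mul, abs_neg_one_pow, one_mul]
  exact abs_of_nonneg (gammaSeriesTerm_nonneg hν hβ k)

end gammaSeriesTerm

theorem stmt_0 (a : ℝ) (n : ℕ) (hn : 0 < n) (β : ℝ) (hβ : 1 < β) :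
    Summable (fun k : ℕ =>
      |(-1 : ℝ) ^ k * a ^ (2 * k) * Real.Gamma ((n + 2 * k) / β) /
        (Real.Gamma (k + 1) * Real.Gamma (k + n / 2))|) := by
  have hν : (0 : ℝ) < n := by exact_mod_cast hn
  simp_rw [abs_neg_one_pow_mul_eq_gammaSeriesTerm hν (one_pos.trans hβ)]
  exact summable_gammaSeriesTerm a hν hβ
end

section
/- For every real ξ, |sin ξ| = ∑_{k ∈ ℤ} g(ξ - kπ), where g(ξ) = (1/2) sin|ξ| + (1/2) sin|ξ - π|, and the series converges (for each ξ only finitely many terms are nonzero on any bounded set, and the full sum converges pointwise). -/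
/-! On `[0, π]` the function `g` is `sin`, and outside it the two halves cancel, so `g` is `sin`
extended by zero off the fundamental domain `[0, π)` of `πℤ`. Hence exactly one term of the series is
nonzero, namely `sin` of the representative of `ξ` in `[0, π)`, which is `|sin ξ|`. -/

open Real Set

theorem hasSum_indicator_Ico_sub_zsmul {α M : Type*} [AddCommGroup α] [LinearOrder α]
    [IsOrderedAddMonoid α] [Archimedean α] [AddCommMonoid M] [TopologicalSpace M]
    {p : α} (hp : 0 < p) (a x : α) (f : α → M) :
    HasSum (fun k : ℤ => (Ico a (a + p)).indicator f (x - k • p)) (f (toIcoMod hp a x)) := by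
  convert hasSum_single (toIcoDiv hp a x) fun k hk => indicator_of_notMem
    (fun hmem => hk (toIcoDiv_eq_of_sub_zsmul_mem_Ico hp hmem).symm) f using 1
  rw [indicator_of_mem (sub_toIcoDiv_zsmul_mem_Ico hp a x), self_sub_toIcoDiv_zsmul]

theorem half_sin_abs_add_half_sin_abs_sub_pi (x : ℝ) :
    (1 / 2) * sin |x| + (1 / 2) * sin |x - π| = (Ico 0 π).indicator sin x := by
  rcases lt_or_ge x 0 with hx | hx
  · rw [indicator_of_notMem (fun h => (not_le.2 hx) h.1), abs_of_neg hx,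
      abs_of_neg (by linarith [pi_pos]), sin_neg, neg_sub, sin_pi_sub]
    ring
  rcases lt_or_ge x π with hxπ | hxπ
  · rw [indicator_of_mem (show x ∈ Ico 0 π from ⟨hx, hxπ⟩), abs_of_nonneg hx, abs_of_neg (by linarith), neg_sub,
      sin_pi_sub]
    ring
  · rw [indicator_of_notMem (fun h => (not_le.2 h.2) hxπ), abs_of_nonneg hx,
      abs_of_nonneg (by linarith), sin_sub_pi]
    ring

theorem abs_sin_eq_sin_toIcoMod_pi (x : ℝ) : |sin x| = sin (toIcoMod pi_pos 0 x) := by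
  have hmem : toIcoMod pi_pos 0 x ∈ Ico 0 π := toIcoMod_mem_Ico' pi_pos x
  rw [← abs_of_nonneg (sin_nonneg_of_nonneg_of_le_pi hmem.1 hmem.2.le),
    ← self_sub_toIcoDiv_zsmul, zsmul_eq_mul, sin_sub_int_mul_pi, abs_mul, abs_neg_one_zpow,
    one_mul]

theorem stmt_2 (g : ℝ → ℝ)
    (hg : g = fun ξ => (1 / 2) * Real.sin |ξ| + (1 / 2) * Real.sin |ξ - π|)
    (ξ : ℝ) :
    HasSum (fun k : ℤ => g (ξ - k * π)) |Real.sin ξ| := by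
  have hg' : g = (Ico 0 π).indicator sin := by
    rw [hg]
    exact funext half_sin_abs_add_half_sin_abs_sub_pi
  simpa only [hg', zero_add, zsmul_eq_mul, ← abs_sin_eq_sin_toIcoMod_pi] using
    hasSum_indicator_Ico_sub_zsmul pi_pos 0 ξ sin
end

section
/- Let P(ξ) = 7/(4π) - (2/π) cos ξ + (1/(4π)) cos(2ξ) and define ψ̂(ξ) = 2π P(ξ)|sin ξ|/|ξ|³ for ξ ≠ 0. For every nonzero integer j, ψ̂(2πj) = 0 and ψ̂'(2πj) = 0. -/
/-!
Since `cos 2ξ = 2 cos² ξ - 1`, one has `2π P(ξ) = (1 - cos ξ)(3 - cos ξ)`, so near `a = 2πj`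
the function is `ψ̂(ξ) = u(ξ) |sin ξ|` with `u(ξ) = (1 - cos ξ)(3 - cos ξ) / |ξ|³` continuous and
vanishing at `a`. As `|sin ξ| ≤ |ξ - a|`, this gives `ψ̂(ξ) = o(ξ - a)`: the zero of `P` at `a`
kills the corner of `|sin|` there.
-/

open Real Filter Topology Asymptotics

theorem hasDerivAt_zero_of_norm_le_mul {𝕜 F : Type*} [NontriviallyNormedField 𝕜]
    [NormedAddCommGroup F] [NormedSpace 𝕜 F] {f : 𝕜 → F} {u : 𝕜 → ℝ} {a : 𝕜}
    (hfa : f a = 0) (hu : Tendsto u (𝓝 a) (𝓝 0))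
    (hle : ∀ᶠ x in 𝓝 a, ‖f x‖ ≤ ‖u x‖ * ‖x - a‖) :
    HasDerivAt f 0 a := by
  have hf : f =O[𝓝 a] fun x => u x * ‖x - a‖ :=
    IsBigO.of_bound 1 (by simpa only [one_mul, norm_mul, norm_norm] using hle)
  have hu_mul : (fun x => u x * ‖x - a‖) =o[𝓝 a] fun x => ‖x - a‖ := by
    simpa only [one_mul] using
      (isLittleO_one_iff (F := ℝ)).mpr hu |>.mul_isBigO (isBigO_refl (fun x => ‖x - a‖) _)
  refine hasDerivAt_iff_isLittleO.mpr ?_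
  simpa only [hfa, sub_zero, smul_zero, isLittleO_norm_right] using hf.trans_isLittleO hu_mul

theorem abs_sin_le_abs_sub_int_mul_two_pi (x : ℝ) (n : ℤ) : |sin x| ≤ |x - n * (2 * π)| := by
  simpa only [sin_sub_int_mul_two_pi] using abs_sin_le_abs (x := x - n * (2 * π))

theorem two_pi_mul_trigPoly_eq (ξ : ℝ) :
    2 * π * (7 / (4 * π) - (2 / π) * cos ξ + (1 / (4 * π)) * cos (2 * ξ)) =
      (1 - cos ξ) * (3 - cos ξ) := by
  rw [cos_two_mul]
  field_simp
  ring

theorem stmt_6 (P ψhat : ℝ → ℝ)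
    (hP : P = fun ξ => 7 / (4 * π) - (2 / π) * Real.cos ξ + (1 / (4 * π)) * Real.cos (2 * ξ))
    (hψ : ∀ ξ : ℝ, ξ ≠ 0 → ψhat ξ = 2 * π * P ξ * |Real.sin ξ| / |ξ| ^ 3)
    (j : ℤ) (hj : j ≠ 0) :
    ψhat (2 * π * j) = 0 ∧ HasDerivAt ψhat 0 (2 * π * j) := by
  have ha_eq : 2 * π * j = j * (2 * π) := mul_comm _ _
  have ha : 2 * π * j ≠ 0 := mul_ne_zero (by positivity) (Int.cast_ne_zero.mpr hj)
  have hψa : ψhat (2 * π * j) = 0 := by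
    have hsin : sin (2 * π * j) = 0 := by
      simpa only [zero_sub, sin_neg, sin_zero, neg_eq_zero, ha_eq] using sin_sub_int_mul_two_pi 0 j
    rw [hψ _ ha, hsin, abs_zero, mul_zero, zero_div]
  refine ⟨hψa, ?_⟩
  apply hasDerivAt_zero_of_norm_le_mul hψa (u := fun ξ => (1 - cos ξ) * (3 - cos ξ) / |ξ| ^ 3)
  · have hcont : ContinuousAt (fun ξ => (1 - cos ξ) * (3 - cos ξ) / |ξ| ^ 3) (2 * π * j) :=
      ContinuousAt.div (by fun_prop) (by fun_prop) (by positivity)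
    simpa only [ha_eq, cos_int_mul_two_pi, sub_self, zero_mul, zero_div] using hcont.tendsto
  · filter_upwards [eventually_ne_nhds ha] with ξ hξ
    have hψξ : ψhat ξ = (1 - cos ξ) * (3 - cos ξ) / |ξ| ^ 3 * |sin ξ| := by
      rw [hψ ξ hξ, hP, two_pi_mul_trigPoly_eq]
      ring
    rw [hψξ, Real.norm_eq_abs, abs_mul, abs_abs, Real.norm_eq_abs, Real.norm_eq_abs, ha_eq]
    exact mul_le_mul_of_nonneg_left (abs_sin_le_abs_sub_int_mul_two_pi ξ j) (abs_nonneg _)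
end

section
/- The function ψ̂(ξ) = e^{-aξ⁴ + ξ²/2} |sin(ξ)/ξ|³ (extended by the value 1 at ξ = 0), for any a > 0, belongs to C²(ℝ). -/
open Real

noncomputable def Fc : ℂ → ℂ := dslope Complex.sin 0

lemma Fc_diff : Differentiable ℂ Fc := by
  have h : DifferentiableOn ℂ (dslope Complex.sin 0) Set.univ :=
    (Complex.differentiableOn_dslope (Filter.univ_mem)).2
      Complex.differentiable_sin.differentiableOn
  exact fun z => (h z (Set.mem_univ z)).differentiableAt Filter.univ_mem

lemma Fc_real (x : ℝ) : (Fc x).re = if x = 0 then 1 else Real.sin x / x := by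
  unfold Fc
  rcases eq_or_ne x 0 with rfl | hx
  · simp [dslope, Function.update, Complex.deriv_sin]
  · have hx' : (x : ℂ) ≠ 0 := Complex.ofReal_ne_zero.2 hx
    rw [dslope_of_ne _ hx', if_neg hx]
    rw [slope_def_field]
    simp [← Complex.ofReal_sin, ← Complex.ofReal_div]

lemma sinc_contDiff : ContDiff ℝ 2 (fun x : ℝ => if x = 0 then 1 else Real.sin x / x) := by
  have h : ContDiff ℝ 2 (fun x : ℝ => (Fc x).re) :=
    Complex.reCLM.contDiff.comp
      ((Fc_diff.contDiff.restrict_scalars ℝ).comp Complex.ofRealCLM.contDiff)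
  rwa [show (fun x : ℝ => (Fc x).re) = fun x : ℝ => if x = 0 then 1 else Real.sin x / x from
    funext Fc_real] at h

lemma hd1 (x : ℝ) : HasDerivAt (fun y : ℝ => |y| ^ 3) (3 * (x * |x|)) x := by
  rcases lt_trichotomy x 0 with hx | rfl | hx
  · have h : HasDerivAt (fun y : ℝ => -(y ^ 3)) (3 * (x * |x|)) x := by
      have := (hasDerivAt_pow 3 x).neg
      refine this.congr_deriv ?_
      rw [abs_of_neg hx]; push_cast; ring
    refine h.congr_of_eventuallyEq ?_
    filter_upwards [Iio_mem_nhds hx] with y hy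
    rw [abs_of_neg hy]; ring
  · simp only [mul_zero, zero_mul, mul_zero]
    rw [hasDerivAt_iff_tendsto_slope]
    have hb : ∀ᶠ y in nhdsWithin (0:ℝ) {0}ᶜ, ‖slope (fun y : ℝ => |y| ^ 3) 0 y‖ ≤ y ^ 2 := by
      filter_upwards [self_mem_nhdsWithin] with y hy
      have hy0 : y ≠ 0 := hy
      rw [slope_def_field]
      simp only [abs_zero]
      rw [show (|y| ^ 3 - 0 ^ 3) / (y - 0) = |y| ^ 3 / y by ring_nf]
      rw [Real.norm_eq_abs, abs_div, abs_pow, abs_abs]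
      rw [pow_succ, mul_div_assoc, div_self (abs_ne_zero.2 hy0), mul_one, sq_abs]
    have ht : Filter.Tendsto (fun y : ℝ => y ^ 2) (nhdsWithin (0:ℝ) {0}ᶜ) (nhds 0) := by
      have : Filter.Tendsto (fun y : ℝ => y ^ 2) (nhds (0:ℝ)) (nhds 0) := by
        simpa using (continuous_pow 2).tendsto (0:ℝ)
      exact this.mono_left nhdsWithin_le_nhds
    exact squeeze_zero_norm' hb ht
  · have h : HasDerivAt (fun y : ℝ => y ^ 3) (3 * (x * |x|)) x := by
      have := hasDerivAt_pow 3 x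
      refine this.congr_deriv ?_
      rw [abs_of_pos hx]; push_cast; ring
    refine h.congr_of_eventuallyEq ?_
    filter_upwards [Ioi_mem_nhds hx] with y hy
    rw [abs_of_pos hy]

lemma hd2 (x : ℝ) : HasDerivAt (fun y : ℝ => 3 * (y * |y|)) (6 * |x|) x := by
  rcases lt_trichotomy x 0 with hx | rfl | hx
  · have h : HasDerivAt (fun y : ℝ => -3 * y ^ 2) (6 * |x|) x := by
      have := (hasDerivAt_pow 2 x).const_mul (-3 : ℝ)
      refine this.congr_deriv ?_
      rw [abs_of_neg hx]; push_cast; ring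
    refine h.congr_of_eventuallyEq ?_
    filter_upwards [Iio_mem_nhds hx] with y hy
    rw [abs_of_neg hy]; ring
  · simp only [abs_zero, mul_zero]
    rw [hasDerivAt_iff_tendsto_slope]
    have hb : ∀ᶠ y in nhdsWithin (0:ℝ) {0}ᶜ,
        ‖slope (fun y : ℝ => 3 * (y * |y|)) 0 y‖ ≤ 3 * |y| := by
      filter_upwards [self_mem_nhdsWithin] with y hy
      have hy0 : y ≠ 0 := hy
      rw [slope_def_field]
      simp only [abs_zero, mul_zero, sub_zero]
      rw [show 3 * (y * |y|) / y = 3 * |y| * (y / y) by ring, div_self hy0, mul_one]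
      rw [Real.norm_eq_abs, abs_mul, abs_abs]
      simp [abs_of_nonneg, abs_nonneg]
    have ht : Filter.Tendsto (fun y : ℝ => 3 * |y|) (nhdsWithin (0:ℝ) {0}ᶜ) (nhds 0) := by
      have : Filter.Tendsto (fun y : ℝ => 3 * |y|) (nhds (0:ℝ)) (nhds 0) := by
        simpa using (show Filter.Tendsto (fun y : ℝ => 3 * |y|) (nhds 0) (nhds (3 * |(0:ℝ)|)) from
          (continuous_const.mul continuous_abs).tendsto (0:ℝ))
      exact this.mono_left nhdsWithin_le_nhds
    exact squeeze_zero_norm' hb ht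
  · have h : HasDerivAt (fun y : ℝ => 3 * y ^ 2) (6 * |x|) x := by
      have := (hasDerivAt_pow 2 x).const_mul (3 : ℝ)
      refine this.congr_deriv ?_
      rw [abs_of_pos hx]; push_cast; ring
    refine h.congr_of_eventuallyEq ?_
    filter_upwards [Ioi_mem_nhds hx] with y hy
    rw [abs_of_pos hy]; ring

lemma abs3_contDiff : ContDiff ℝ 2 (fun x : ℝ => |x| ^ 3) := by
  rw [show (2 : WithTop ℕ∞) = 1 + 1 from rfl, contDiff_succ_iff_deriv]
  refine ⟨fun x => (hd1 x).differentiableAt, by simp, ?_⟩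
  have hderiv : deriv (fun x : ℝ => |x| ^ 3) = fun x => 3 * (x * |x|) :=
    funext fun x => (hd1 x).deriv
  rw [hderiv, contDiff_one_iff_deriv]
  refine ⟨fun x => (hd2 x).differentiableAt, ?_⟩
  have hderiv2 : deriv (fun x : ℝ => 3 * (x * |x|)) = fun x => 6 * |x| :=
    funext fun x => (hd2 x).deriv
  rw [hderiv2]
  exact continuous_const.mul continuous_abs

theorem stmt_10 (a : ℝ) (ha : 0 < a) (ψhat : ℝ → ℝ)
    (hψ : ψhat = fun ξ => Real.exp (-a * ξ ^ 4 + ξ ^ 2 / 2) *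
      |if ξ = 0 then 1 else Real.sin ξ / ξ| ^ 3) :
    ContDiff ℝ 2 ψhat := by
  subst hψ
  have hexp : ContDiff ℝ 2 (fun ξ : ℝ => Real.exp (-a * ξ ^ 4 + ξ ^ 2 / 2)) := by
    apply ContDiff.exp
    exact ((contDiff_const.mul (contDiff_id.pow 4)).add
      ((contDiff_id.pow 2).div_const 2))
  exact hexp.mul (abs3_contDiff.comp sinc_contDiff)
end

section
/- For each β > 1, each positive integer n, and each ξ ∈ ℝⁿ, the limit as u → ∞ of ∑_{k=0}^∞ (-1)^k (‖ξ‖/2)^{2k} γ((n+2k)/β, u^β) / (k! Γ(k+n/2)) equals ∑_{k=0}^∞ (-1)^k (‖ξ‖/2)^{2k} Γ((n+2k)/β) / (k! Γ(k+n/2)), where γ(s,u) is the lower incomplete Gamma function. -/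
open Real Filter MeasureTheory

/-- The lower incomplete Gamma function `γ(s, u) = ∫₀ᵘ e^{-t} t^{s-1} dt`. -/
noncomputable def lowerIncompleteGamma (s u : ℝ) : ℝ :=
  ∫ t in (0 : ℝ)..u, Real.exp (-t) * t ^ (s - 1)

/-!
Termwise, `γ(s, u^β) → Γ(s)` with `0 ≤ γ(s, u^β) ≤ Γ(s)`, so by dominated convergence for
series (Tannery's theorem) it suffices that `∑ x^{2k} Γ((n+2k)/β) / (k! Γ(k+n/2))` converges,
where `x = ‖ξ‖/2`.
By log-convexity of `Γ`, passing from `k` to `k+1` multiplies its terms by at most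
`x² ((s+1)s)^{1/β} / ((k+1)(k+n/2))` with `s = (n+2k)/β`, which is `O(k^{2/β-2}) → 0` since `β > 1`.
-/

open scoped Topology Nat

lemma lowerIncompleteGamma_nonneg (s : ℝ) {u : ℝ} (hu : 0 ≤ u) :
    0 ≤ lowerIncompleteGamma s u :=
  intervalIntegral.integral_nonneg hu fun t ht => by have := ht.1; positivity

lemma lowerIncompleteGamma_le_Gamma {s u : ℝ} (hs : 0 < s) (hu : 0 ≤ u) :
    lowerIncompleteGamma s u ≤ Gamma s := by
  rw [lowerIncompleteGamma, intervalIntegral.integral_of_le hu, Gamma_eq_integral hs]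
  refine setIntegral_mono_set (GammaIntegral_convergent hs) ?_ Set.Ioc_subset_Ioi_self.eventuallyLE
  filter_upwards [ae_restrict_mem measurableSet_Ioi] with t (ht : 0 < t)
  positivity

lemma tendsto_lowerIncompleteGamma_atTop {s : ℝ} (hs : 0 < s) :
    Tendsto (lowerIncompleteGamma s) atTop (𝓝 (Gamma s)) := by
  rw [Gamma_eq_integral hs]
  exact intervalIntegral_tendsto_integral_Ioi 0 (GammaIntegral_convergent hs) tendsto_id

lemma Gamma_add_two_mul_le {θ s : ℝ} (hθ₀ : 0 < θ) (hθ₁ : θ < 1) (hs : 0 < s) :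
    Gamma (s + 2 * θ) ≤ Gamma s * ((s + 1) * s) ^ θ := by
  have hΓ := Gamma_pos_of_pos hs
  have hΓ_add_two : Gamma (s + 2) = (s + 1) * s * Gamma s := by
    rw [show s + 2 = s + 1 + 1 by ring, Gamma_add_one (by positivity), Gamma_add_one hs.ne']
    ring
  calc Gamma (s + 2 * θ) = Gamma ((1 - θ) * s + θ * (s + 2)) := by ring_nf
    _ ≤ Gamma s ^ (1 - θ) * Gamma (s + 2) ^ θ :=
      Gamma_mul_add_mul_le_rpow_Gamma_mul_rpow_Gamma hs (by positivity) (by linarith) hθ₀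
        (sub_add_cancel 1 θ)
    _ = Gamma s ^ (1 - θ + θ) * ((s + 1) * s) ^ θ := by
      rw [hΓ_add_two, mul_rpow (by positivity) hΓ.le, rpow_add hΓ]
      ring
    _ = Gamma s * ((s + 1) * s) ^ θ := by simp

noncomputable def besselMajorant (β ν x : ℝ) (k : ℕ) : ℝ :=
  x ^ (2 * k) * Gamma ((ν + 2 * k) / β) / (k ! * Gamma (k + ν / 2))

section besselMajorant

variable {β ν : ℝ} (x : ℝ)

lemma besselMajorant_nonneg (hβ : 0 < β) (hν : 0 < ν) (k : ℕ) :
    0 ≤ besselMajorant β ν x k := by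
  have := (even_two_mul k).pow_nonneg x
  have := Gamma_pos_of_pos (show 0 < (k : ℝ) + ν / 2 by positivity)
  have := Gamma_pos_of_pos (show 0 < (ν + 2 * k) / β by positivity)
  unfold besselMajorant
  positivity

lemma besselMajorant_succ_le (hβ : 1 < β) (hν : 0 < ν) (k : ℕ) :
    besselMajorant β ν x (k + 1) ≤
      x ^ 2 * (((ν + 2 * k) / β + 1) * ((ν + 2 * k) / β)) ^ β⁻¹ / ((k + 1) * (k + ν / 2)) *
        besselMajorant β ν x k := by
  set s := (ν + 2 * k) / β with hs_def
  have hs : 0 < s := by positivity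
  have hshift : (ν + 2 * ((k + 1 : ℕ) : ℝ)) / β = s + 2 * β⁻¹ := by
    simp only [s]; push_cast; ring
  have hden : ((k + 1) ! : ℝ) * Gamma ((k + 1 : ℕ) + ν / 2) =
      (k + 1) * (k + ν / 2) * (k ! * Gamma (k + ν / 2)) := by
    rw [Nat.factorial_succ, show ((k + 1 : ℕ) : ℝ) + ν / 2 = k + ν / 2 + 1 by push_cast; ring,
      Gamma_add_one (by positivity)]
    push_cast
    ring
  have hD : 0 < (k + 1) * (k + ν / 2) * (k ! * Gamma (k + ν / 2)) := by
    have := Gamma_pos_of_pos (show 0 < (k : ℝ) + ν / 2 by positivity)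
    positivity
  calc besselMajorant β ν x (k + 1)
      = x ^ (2 * k) * x ^ 2 * Gamma (s + 2 * β⁻¹) /
          ((k + 1) * (k + ν / 2) * (k ! * Gamma (k + ν / 2))) := by
        rw [besselMajorant, hshift, hden, mul_add, pow_add, mul_one]
    _ ≤ x ^ (2 * k) * x ^ 2 * (Gamma s * ((s + 1) * s) ^ β⁻¹) /
          ((k + 1) * (k + ν / 2) * (k ! * Gamma (k + ν / 2))) := by
        gcongr
        · exact mul_nonneg ((even_two_mul k).pow_nonneg x) (sq_nonneg x)
        · exact Gamma_add_two_mul_le (by positivity) (inv_lt_one_of_one_lt₀ hβ) hs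
    _ = _ := by
        rw [besselMajorant, ← hs_def]
        field_simp

lemma eventually_besselMajorant_succ_le (hβ : 1 < β) (hν : 0 < ν) :
    ∀ᶠ k : ℕ in atTop, besselMajorant β ν x (k + 1) ≤ 2⁻¹ * besselMajorant β ν x k := by
  have hβ₀ : 0 < β := by linarith
  -- for `k ≥ max 1 ν`: `(s + 1) s ≤ 12 k²` and `(k + 1)(k + ν/2) ≥ k²`
  have hdecay : Tendsto (fun k : ℕ => 12 * x ^ 2 * (12 * (k : ℝ) ^ 2) ^ (β⁻¹ - 1)) atTop (𝓝 0) := by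
    have h := (tendsto_rpow_neg_atTop (sub_pos.2 (inv_lt_one_of_one_lt₀ hβ))).comp
      (((tendsto_pow_atTop two_ne_zero).const_mul_atTop (by norm_num : (0 : ℝ) < 12)).comp
        tendsto_natCast_atTop_atTop)
    simpa [neg_sub] using h.const_mul (12 * x ^ 2)
  filter_upwards [hdecay.eventually_le_const (by norm_num : (0 : ℝ) < 2⁻¹),
    eventually_ge_atTop 1, eventually_ge_atTop ⌈ν⌉₊] with k hk_small hk₁ hkν
  have hk₁ : (1 : ℝ) ≤ k := by exact_mod_cast hk₁
  have hkν : ν ≤ k := Nat.ceil_le.1 hkν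
  set s := (ν + 2 * k) / β
  have hs : 0 < s := by positivity
  have hs_le : s ≤ 3 * k := by
    have : s ≤ ν + 2 * k := div_le_self (by positivity) hβ.le
    linarith
  have hP : ((s + 1) * s) ^ β⁻¹ ≤ (12 * (k : ℝ) ^ 2) ^ (β⁻¹ - 1) * (12 * k ^ 2) := by
    rw [rpow_sub_one (by positivity), div_mul_cancel₀ _ (by positivity)]
    exact rpow_le_rpow (by positivity) (by nlinarith) (by positivity)
  have hratio : x ^ 2 * ((s + 1) * s) ^ β⁻¹ / ((k + 1) * (k + ν / 2)) ≤
      12 * x ^ 2 * (12 * (k : ℝ) ^ 2) ^ (β⁻¹ - 1) := by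
    rw [div_le_iff₀ (by positivity)]
    calc x ^ 2 * ((s + 1) * s) ^ β⁻¹
        ≤ x ^ 2 * ((12 * (k : ℝ) ^ 2) ^ (β⁻¹ - 1) * (12 * k ^ 2)) := by gcongr
      _ = 12 * x ^ 2 * (12 * (k : ℝ) ^ 2) ^ (β⁻¹ - 1) * k ^ 2 := by ring
      _ ≤ 12 * x ^ 2 * (12 * (k : ℝ) ^ 2) ^ (β⁻¹ - 1) * ((k + 1) * (k + ν / 2)) := by
        gcongr
        nlinarith
  calc besselMajorant β ν x (k + 1) ≤ _ := besselMajorant_succ_le x hβ hν k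
    _ ≤ 2⁻¹ * besselMajorant β ν x k := by
      gcongr
      · exact besselMajorant_nonneg x hβ₀ hν k
      · exact hratio.trans hk_small

lemma summable_besselMajorant (hβ : 1 < β) (hν : 0 < ν) : Summable (besselMajorant β ν x) := by
  have hnonneg := besselMajorant_nonneg x (β := β) (by linarith) hν
  refine summable_of_ratio_norm_eventually_le (by norm_num : (2⁻¹ : ℝ) < 1) ?_
  filter_upwards [eventually_besselMajorant_succ_le x hβ hν] with k hk
  rwa [norm_of_nonneg (hnonneg _), norm_of_nonneg (hnonneg _)]

lemma norm_term_le_besselMajorant (hβ : 0 < β) (hν : 0 < ν) (k : ℕ) {v : ℝ} (hv : 0 ≤ v) :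
    ‖(-1 : ℝ) ^ k * x ^ (2 * k) * lowerIncompleteGamma ((ν + 2 * k) / β) v /
        (k ! * Gamma (k + ν / 2))‖ ≤ besselMajorant β ν x k := by
  have hx := (even_two_mul k).pow_nonneg x
  have hγ := lowerIncompleteGamma_nonneg ((ν + 2 * k) / β) hv
  have hΓ := Gamma_pos_of_pos (show 0 < (k : ℝ) + ν / 2 by positivity)
  rw [norm_div, norm_mul, norm_mul, norm_pow, norm_neg, norm_one, one_pow, one_mul,
    norm_of_nonneg hx, norm_of_nonneg hγ, norm_of_nonneg (by positivity), besselMajorant]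
  gcongr
  exact lowerIncompleteGamma_le_Gamma (by positivity) hv

end besselMajorant

theorem stmt_13 (β : ℝ) (hβ : 1 < β) (n : ℕ) (hn : 0 < n)
    (ξ : EuclideanSpace ℝ (Fin n)) :
    Tendsto (fun u : ℝ => ∑' k : ℕ,
        (-1 : ℝ) ^ k * (‖ξ‖ / 2) ^ (2 * k) *
          lowerIncompleteGamma ((n + 2 * k) / β) (u ^ β) /
            (k.factorial * Real.Gamma (k + n / 2)))
      atTop
      (nhds (∑' k : ℕ,
        (-1 : ℝ) ^ k * (‖ξ‖ / 2) ^ (2 * k) * Real.Gamma ((n + 2 * k) / β) /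
          (k.factorial * Real.Gamma (k + n / 2)))) := by
  have hβ₀ : 0 < β := by linarith
  have hn' : (0 : ℝ) < n := by exact_mod_cast hn
  refine tendsto_tsum_of_dominated_convergence (summable_besselMajorant (‖ξ‖ / 2) hβ hn')
    (fun k => ?_) ?_
  · have hs : 0 < (n + 2 * k : ℝ) / β := by positivity
    exact (((tendsto_lowerIncompleteGamma_atTop hs).comp (tendsto_rpow_atTop hβ₀)).const_mul
      _).div_const _
  · filter_upwards [eventually_ge_atTop 0] with u hu k
    exact norm_term_le_besselMajorant _ hβ₀ hn' k (rpow_nonneg hu β)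
end
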